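/- arXiv:2202.04928 — 3 statements merged into one kernel-verified Lean document; each statement's English description precedes it below -/
import Mathlib

section
/- Let 0 < α < 1 and let v be an absolutely continuous real-valued function on [0,T]. Then for all t ∈ (0,T], v(t) · ∂_t^α v(t) ≥ (1/2) ∂_t^α (v²)(t). -/
open MeasureTheory Real Filter
open scoped ENNReal

noncomputable section

/-- Euclidean space `ℝ^N`. -/
abbrev Euc (N : ℕ) := EuclideanSpace ℝ (Fin N)

/-- Left Caputo fractional derivative of order `α`:
`∂_t^α f(t) = (1/Γ(1-α)) ∫_0^t f'(s) (t-s)^{-α} ds`. -/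
def caputo (α : ℝ) (f : ℝ → ℝ) (t : ℝ) : ℝ :=
  (1 / Real.Gamma (1 - α)) * ∫ s in Set.Ioo (0:ℝ) t, deriv f s * (t - s) ^ (-α)

/-- The closed cube `B(x,δ) = {y : |yᵢ - xᵢ| ≤ δ}`. -/
def Cube {N : ℕ} (x : Euc N) (δ : ℝ) : Set (Euc N) := {y | ∀ i, |y i - x i| ≤ δ}

/-- Divergence of a vector field on `ℝ^N`. -/
def diverg {N : ℕ} (F : Euc N → Euc N) (x : Euc N) : ℝ :=
  ∑ i, fderiv ℝ (fun y => F y i) x (EuclideanSpace.single i 1)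

/-- The p-Laplacian `Δ_p u = div(|∇u|^{p-2} ∇u)`. -/
def pLap {N : ℕ} (p : ℝ) (u : Euc N → ℝ) (x : Euc N) : ℝ :=
  diverg (fun y => ‖gradient u y‖ ^ (p - 2) • gradient u y) x

/-- The Laplacian as the sum of second partial derivatives. -/
def lap {N : ℕ} (f : Euc N → ℝ) (x : Euc N) : ℝ :=
  ∑ i, fderiv ℝ (fun y => fderiv ℝ f y (EuclideanSpace.single i 1)) x (EuclideanSpace.single i 1)

/-- Convolution `(J*u)(x) = ∫_{ℝ^N} J(x-y) u(y) dy`. -/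
def conv {N : ℕ} (J u : Euc N → ℝ) (x : Euc N) : ℝ := ∫ y, J (x - y) * u y

/-- Hypotheses on the competition kernel `J`:
`0 ≤ J ∈ L¹`, `∫ J = 1`, and `inf_{B(0,δ₀)} J > η`. -/
def KernelHyp {N : ℕ} (J : Euc N → ℝ) (δ₀ η : ℝ) : Prop :=
  (∀ y, 0 ≤ J y) ∧ Integrable J ∧ (∫ y, J y) = 1 ∧
    η < sInf (J '' {y | ∀ i, |y i| < δ₀})

/-- Absolute continuity of `f` on `[0,T]`, encoded via the fundamental theorem of calculus:
the a.e. derivative is integrable and `f t = f 0 + ∫_0^t f'`. -/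
def AbsCont (f : ℝ → ℝ) (T : ℝ) : Prop :=
  IntegrableOn (deriv f) (Set.Icc 0 T) ∧
    ∀ t ∈ Set.Icc (0:ℝ) T, f t = f 0 + ∫ s in (0:ℝ)..t, deriv f s

/-!
Write `k(s) = (t - s)^(-α)`. Almost everywhere `(v²)' = 2 v v'`, so
`v(t) ∂^α v(t) - ½ ∂^α (v²)(t)` is a positive multiple of
`∫₀ᵗ (v(t) - v(s)) v'(s) k(s) ds = -½ ∫₀ᵗ W'(s) k(s) ds`, where `W = (v(t) - v)²` is absolutely
continuous, nonnegative and vanishes at `t`. Since `k(s) = t^(-α) + ∫₀ˢ α (t - x)^(-α-1) dx` has a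
nonnegative density, Fubini gives
`∫₀ᵗ W' k = -t^(-α) W(0) - ∫₀ᵗ α (t - x)^(-α-1) W(x) dx ≤ 0`.
-/

open Set

theorem AbsolutelyContinuousOnInterval.congr {X : Type*} [PseudoMetricSpace X] {f g : ℝ → X}
    {a b : ℝ} (hf : AbsolutelyContinuousOnInterval f a b) (hfg : EqOn f g (uIcc a b)) :
    AbsolutelyContinuousOnInterval g a b := by
  refine Tendsto.congr' ?_ hf
  filter_upwards [mem_inf_of_right (mem_principal_self _)] with E hE
  exact Finset.sum_congr rfl fun i hi => by rw [hfg (hE.1 i hi).1, hfg (hE.1 i hi).2]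

theorem absolutelyContinuousOnInterval_const {X : Type*} [PseudoMetricSpace X] (c : X) (a b : ℝ) :
    AbsolutelyContinuousOnInterval (fun _ => c) a b :=
  (LipschitzWith.const c).lipschitzOnWith.absolutelyContinuousOnInterval

theorem AbsCont.absolutelyContinuousOnInterval {f : ℝ → ℝ} {T : ℝ} (hf : AbsCont f T)
    (hT : 0 ≤ T) : AbsolutelyContinuousOnInterval f 0 T := by
  have hint : IntervalIntegrable (deriv f) volume 0 T :=
    (intervalIntegrable_iff_integrableOn_Icc_of_le hT).2 hf.1
  refine ((absolutelyContinuousOnInterval_const (f 0) 0 T).add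
    (hint.absolutelyContinuousOnInterval_intervalIntegral left_mem_uIcc)).congr fun x hx => ?_
  rw [uIcc_of_le hT] at hx
  exact (hf.2 x hx).symm

theorem AbsolutelyContinuousOnInterval.integrableOn_deriv_Ioo {f : ℝ → ℝ} {a b : ℝ}
    (hf : AbsolutelyContinuousOnInterval f a b) (hab : a ≤ b) : IntegrableOn (deriv f) (Ioo a b) :=
  (intervalIntegrable_iff_integrableOn_Ioo_of_le hab).1 hf.intervalIntegrable_deriv

theorem AbsolutelyContinuousOnInterval.ae_restrict_differentiableAt {f : ℝ → ℝ} {a b : ℝ}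
    (hf : AbsolutelyContinuousOnInterval f a b) :
    ∀ᵐ x ∂volume.restrict (Ioo a b), DifferentiableAt ℝ f x := by
  filter_upwards [ae_restrict_mem measurableSet_Ioo, ae_restrict_of_ae hf.ae_differentiableAt]
    with x hx hfx
  exact hfx (Icc_subset_uIcc (Ioo_subset_Icc_self hx))

theorem continuousOn_sub_rpow (β : ℝ) {t : ℝ} {s : Set ℝ} (hs : ∀ x ∈ s, x < t) :
    ContinuousOn (fun x => (t - x) ^ β) s :=
  ContinuousOn.rpow_const (by fun_prop) fun x hx => Or.inl (sub_ne_zero.2 (hs x hx).ne')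

theorem integral_mul_sub_rpow_neg_sub_one {α t a b : ℝ} (ha : a < t) (hb : b < t) :
    ∫ x in a..b, α * (t - x) ^ (-α - 1) = (t - b) ^ (-α) - (t - a) ^ (-α) := by
  have hlt : ∀ x ∈ uIcc a b, x < t := fun x hx => (max_lt ha hb).trans_le' hx.2
  refine intervalIntegral.integral_eq_sub_of_hasDerivAt (f := fun x => (t - x) ^ (-α))
    (fun x hx => ?_) (ContinuousOn.intervalIntegrable ?_)
  · exact ((Real.hasDerivAt_rpow_const (Or.inl (sub_pos.2 (hlt x hx)).ne')).comp x
      ((hasDerivAt_id x).const_sub t)).congr_deriv (by ring)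
  · exact continuousOn_const.mul (continuousOn_sub_rpow _ hlt)

theorem setIntegral_Ioo_mul_setIntegral_Ioo_swap {φ κ : ℝ → ℝ} {a b : ℝ} (hφ : Measurable φ)
    (hκ : Measurable κ) (hκ_nonneg : ∀ x ∈ Ioo a b, 0 ≤ κ x)
    (hκ_int : ∀ s ∈ Ioo a b, IntegrableOn κ (Ioo a s))
    (hint : IntegrableOn (fun s => φ s * ∫ x in Ioo a s, κ x) (Ioo a b)) :
    ∫ s in Ioo a b, φ s * ∫ x in Ioo a s, κ x = ∫ x in Ioo a b, κ x * ∫ s in Ioo x b, φ s := by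
  set Ψ : ℝ × ℝ → ℝ := fun p => (Iio p.1).indicator (fun x => φ p.1 * κ x) p.2 with hΨ
  have hΨm : Measurable Ψ := by
    refine Measurable.ite (measurableSet_lt measurable_snd measurable_fst) ?_ measurable_const
    exact (hφ.comp measurable_fst).mul (hκ.comp measurable_snd)
  have hIoo_Iio : ∀ s ∈ Ioo a b, Ioo a b ∩ Iio s = Ioo a s := fun s hs => by
    rw [Ioo_inter_Iio, min_eq_right hs.2.le]
  have hleft : ∀ s ∈ Ioo a b,
      ∫ x in Ioo a b, Ψ (s, x) = φ s * ∫ x in Ioo a s, κ x := fun s hs => by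
    change ∫ x in Ioo a b, (Iio s).indicator (fun x => φ s * κ x) x = _
    rw [setIntegral_indicator measurableSet_Iio, hIoo_Iio s hs, integral_const_mul]
  have hright : ∀ x ∈ Ioo a b,
      ∫ s in Ioo a b, Ψ (s, x) = κ x * ∫ s in Ioo x b, φ s := fun x hx => by
    have : (fun s => Ψ (s, x)) = (Ioi x).indicator (fun s => φ s * κ x) := by
      ext s; simp [hΨ, indicator_apply]
    rw [this, setIntegral_indicator measurableSet_Ioi, Ioo_inter_Ioi, max_eq_right hx.1.le,
      integral_mul_const, mul_comm]
  have hleft_norm : ∀ s ∈ Ioo a b,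
      ∫ x in Ioo a b, ‖Ψ (s, x)‖ = ‖φ s * ∫ x in Ioo a s, κ x‖ := fun s hs => by
    have hκ_eq : ∫ x in Ioo a s, ‖κ x‖ = ∫ x in Ioo a s, κ x :=
      setIntegral_congr_fun measurableSet_Ioo fun x hx =>
        Real.norm_of_nonneg (hκ_nonneg x ⟨hx.1, hx.2.trans hs.2⟩)
    have : (fun x => ‖Ψ (s, x)‖) = (Iio s).indicator (fun x => ‖φ s‖ * ‖κ x‖) := by
      ext x; by_cases h : x < s <;> simp [hΨ, h]
    have hκ_int_nonneg : 0 ≤ ∫ x in Ioo a s, κ x :=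
      setIntegral_nonneg measurableSet_Ioo fun x hx => hκ_nonneg x ⟨hx.1, hx.2.trans hs.2⟩
    rw [this, setIntegral_indicator measurableSet_Iio, hIoo_Iio s hs, integral_const_mul, hκ_eq,
      norm_mul, Real.norm_of_nonneg hκ_int_nonneg]
  have hΨi : Integrable Ψ ((volume.restrict (Ioo a b)).prod (volume.restrict (Ioo a b))) := by
    refine (integrable_prod_iff hΨm.aestronglyMeasurable).2 ⟨?_, ?_⟩
    · refine ae_restrict_of_forall_mem measurableSet_Ioo fun s hs => ?_
      refine (integrable_indicator_iff measurableSet_Iio).2 ?_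
      rw [IntegrableOn, Measure.restrict_restrict measurableSet_Iio, inter_comm, hIoo_Iio s hs]
      exact (hκ_int s hs).const_mul (φ s)
    · refine hint.norm.congr ?_
      filter_upwards [ae_restrict_mem measurableSet_Ioo] with s hs
      exact (hleft_norm s hs).symm
  calc ∫ s in Ioo a b, φ s * ∫ x in Ioo a s, κ x
      = ∫ s in Ioo a b, ∫ x in Ioo a b, Ψ (s, x) :=
        setIntegral_congr_fun measurableSet_Ioo fun s hs => (hleft s hs).symm
    _ = ∫ x in Ioo a b, ∫ s in Ioo a b, Ψ (s, x) := integral_integral_swap hΨi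
    _ = ∫ x in Ioo a b, κ x * ∫ s in Ioo x b, φ s :=
        setIntegral_congr_fun measurableSet_Ioo hright

theorem setIntegral_deriv_mul_rpow_nonpos {W : ℝ → ℝ} {α t : ℝ} (hα : 0 ≤ α) (ht : 0 < t)
    (hW : AbsolutelyContinuousOnInterval W 0 t) (hW_nonneg : ∀ x ∈ Icc 0 t, 0 ≤ W x)
    (hWt : W t = 0) :
    ∫ s in Ioo 0 t, deriv W s * (t - s) ^ (-α) ≤ 0 := by
  by_cases hint : IntegrableOn (fun s => deriv W s * (t - s) ^ (-α)) (Ioo 0 t)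
  swap
  · rw [integral_undef hint]
  set κ : ℝ → ℝ := fun x => α * (t - x) ^ (-α - 1)
  have hkernel : ∀ s ∈ Ioo 0 t, (t - s) ^ (-α) = t ^ (-α) + ∫ x in Ioo 0 s, κ x := fun s hs => by
    rw [← integral_Ioc_eq_integral_Ioo, ← intervalIntegral.integral_of_le hs.1.le,
      integral_mul_sub_rpow_neg_sub_one ht hs.2, sub_zero]
    ring
  have htail : ∀ x ∈ Ico 0 t, ∫ s in Ioo x t, deriv W s = -W x := fun x hx => by
    have hWx := hW.mono (uIcc_subset_uIcc (mem_uIcc_of_le hx.1 hx.2.le) right_mem_uIcc)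
    rw [← integral_Ioc_eq_integral_Ioo, ← intervalIntegral.integral_of_le hx.2.le,
      hWx.integral_deriv_eq_sub, hWt, zero_sub]
  have hW'_int := hW.integrableOn_deriv_Ioo ht.le
  have hκ_int : ∀ s ∈ Ioo 0 t, IntegrableOn κ (Ioo 0 s) := fun s hs =>
    (continuousOn_const.mul (continuousOn_sub_rpow _ fun x hx => hx.2.trans_lt hs.2)
      |>.integrableOn_Icc).mono_set Ioo_subset_Icc_self
  have hsplit_int : IntegrableOn (fun s => deriv W s * ∫ x in Ioo 0 s, κ x) (Ioo 0 t) := by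
    refine (hint.sub (hW'_int.mul_const (t ^ (-α)))).congr_fun (fun s hs => ?_) measurableSet_Ioo
    simp only [Pi.sub_apply, hkernel s hs]
    ring
  have hκ_nonneg : ∀ x ∈ Ioo 0 t, 0 ≤ κ x := fun x hx =>
    mul_nonneg hα (rpow_nonneg (sub_pos.2 hx.2).le _)
  have hfubini := setIntegral_Ioo_mul_setIntegral_Ioo_swap (measurable_deriv W)
    (by fun_prop : Measurable κ) hκ_nonneg hκ_int hsplit_int
  calc ∫ s in Ioo 0 t, deriv W s * (t - s) ^ (-α)
      = ∫ s in Ioo 0 t, (deriv W s * t ^ (-α) + deriv W s * ∫ x in Ioo 0 s, κ x) :=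
        setIntegral_congr_fun measurableSet_Ioo fun s hs => by rw [hkernel s hs]; ring
    _ = -W 0 * t ^ (-α) + ∫ x in Ioo 0 t, κ x * -W x := by
        rw [integral_add (hW'_int.mul_const _) hsplit_int, integral_mul_const, htail 0 ⟨le_rfl, ht⟩,
          hfubini]
        congr 1
        exact setIntegral_congr_fun measurableSet_Ioo fun x hx => by
          rw [htail x (Ioo_subset_Ico_self hx)]
    _ ≤ 0 := by
        have h0 := hW_nonneg 0 ⟨le_rfl, ht.le⟩
        have h1 : ∫ x in Ioo 0 t, κ x * -W x ≤ 0 := setIntegral_nonpos measurableSet_Ioo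
          fun x hx => mul_nonpos_of_nonneg_of_nonpos (hκ_nonneg x hx)
            (neg_nonpos.2 (hW_nonneg x (Ioo_subset_Icc_self hx)))
        nlinarith [rpow_nonneg ht.le (-α)]

theorem IntegrableOn.of_mul_left_of_ne_zero {f g : ℝ → ℝ} {a b : ℝ}
    (hf : ContinuousWithinAt f (Iio b) b) (hfb : f b ≠ 0)
    (hgm : AEStronglyMeasurable g (volume.restrict (Ioo a b)))
    (hg : ∀ c < b, IntegrableOn g (Ioo a c)) (hfg : IntegrableOn (fun x => f x * g x) (Ioo a b)) :
    IntegrableOn g (Ioo a b) := by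
  have hfb_pos : 0 < ‖f b‖ := norm_pos_iff.2 hfb
  obtain ⟨l, hl, hfl⟩ : ∃ l ∈ Iio b, Ioo l b ⊆ {x | ‖f b‖ / 2 < ‖f x‖} :=
    mem_nhdsLT_iff_exists_Ioo_subset.1 <|
      hf.norm.eventually (lt_mem_nhds (half_lt_self hfb_pos))
  have hcover : Ioo a b ⊆ Ioo a ((l + b) / 2) ∪ (Ioo a b ∩ Ioo l b) := fun x hx => by
    by_cases h : x < (l + b) / 2
    · exact Or.inl ⟨hx.1, h⟩
    · exact Or.inr ⟨hx, by linarith [mem_Iio.1 hl], hx.2⟩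
  refine IntegrableOn.mono_set (IntegrableOn.union (hg _ (by linarith [mem_Iio.1 hl])) ?_) hcover
  refine ((hfg.mono_set inter_subset_left).norm.const_mul (2 / ‖f b‖)).mono'
    (hgm.mono_measure (Measure.restrict_mono inter_subset_left le_rfl)) ?_
  refine ae_restrict_of_forall_mem (measurableSet_Ioo.inter measurableSet_Ioo) fun x hx => ?_
  have hfx : ‖f b‖ / 2 < ‖f x‖ := hfl hx.2
  rw [norm_mul, ← mul_assoc]
  refine le_mul_of_one_le_left (norm_nonneg _) ?_
  rw [div_mul_eq_mul_div, le_div_iff₀ hfb_pos]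
  linarith

theorem setIntegral_sub_mul_deriv_mul_rpow_nonneg {v : ℝ → ℝ} {α t : ℝ} (hα : 0 ≤ α)
    (ht : 0 < t) (hv : AbsolutelyContinuousOnInterval v 0 t) :
    0 ≤ ∫ s in Ioo 0 t, (v t - v s) * (deriv v s * (t - s) ^ (-α)) := by
  set W : ℝ → ℝ := fun s => (v t - v s) * (v t - v s) with hW
  have hW_ac : AbsolutelyContinuousOnInterval W 0 t :=
    ((absolutelyContinuousOnInterval_const (v t) 0 t).sub hv).fun_mul
      ((absolutelyContinuousOnInterval_const (v t) 0 t).sub hv)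
  have hW_nonpos := setIntegral_deriv_mul_rpow_nonpos hα ht hW_ac (fun x _ => mul_self_nonneg _)
    (by simp [hW])
  have hderiv : ∀ᵐ s ∂volume.restrict (Ioo 0 t),
      (v t - v s) * (deriv v s * (t - s) ^ (-α)) = -(1 / 2) * (deriv W s * (t - s) ^ (-α)) := by
    filter_upwards [hv.ae_restrict_differentiableAt] with s hs
    have h := hs.hasDerivAt.const_sub (v t)
    have hW' : HasDerivAt W _ s := h.mul h
    rw [hW'.deriv]
    ring
  rw [integral_congr_ae hderiv, integral_const_mul]
  linarith

theorem half_setIntegral_deriv_sq_mul_rpow_le {v : ℝ → ℝ} {α t : ℝ} (hα : 0 ≤ α) (ht : 0 < t)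
    (hv : AbsolutelyContinuousOnInterval v 0 t) :
    1 / 2 * ∫ s in Ioo 0 t, deriv (fun s => v s ^ 2) s * (t - s) ^ (-α)
      ≤ v t * ∫ s in Ioo 0 t, deriv v s * (t - s) ^ (-α) := by
  have hgap := setIntegral_sub_mul_deriv_mul_rpow_nonneg hα ht hv
  have hsq : ∫ s in Ioo 0 t, deriv (fun s => v s ^ 2) s * (t - s) ^ (-α)
      = 2 * ∫ s in Ioo 0 t, v s * (deriv v s * (t - s) ^ (-α)) := by
    rw [← integral_const_mul]
    refine integral_congr_ae ?_
    filter_upwards [hv.ae_restrict_differentiableAt] with s hs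
    have hsq' : HasDerivAt (fun s => v s ^ 2) _ s := hs.hasDerivAt.pow 2
    rw [hsq'.deriv]
    push_cast
    ring
  -- A divergent integral is `0` in Lean; the case split below covers these junk values.
  by_cases hint : IntegrableOn (fun s => deriv v s * (t - s) ^ (-α)) (Ioo 0 t)
  · have hint_v : IntegrableOn (fun s => v s * (deriv v s * (t - s) ^ (-α))) (Ioo 0 t) :=
      hint.continuousOn_mul_of_subset hv.continuousOn isCompact_uIcc measurableSet_Ioo
        (Ioo_subset_Icc_self.trans Icc_subset_uIcc)
    have hsplit : ∫ s in Ioo 0 t, (v t - v s) * (deriv v s * (t - s) ^ (-α))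
        = v t * (∫ s in Ioo 0 t, deriv v s * (t - s) ^ (-α))
          - ∫ s in Ioo 0 t, v s * (deriv v s * (t - s) ^ (-α)) := by
      rw [← integral_const_mul, ← integral_sub (hint.const_mul _) hint_v]
      exact setIntegral_congr_fun measurableSet_Ioo fun s _ => by ring
    linarith
  rw [integral_undef hint, mul_zero]
  by_cases hvt : v t = 0
  · simp only [hvt, zero_sub, neg_mul, integral_neg] at hgap
    linarith
  have hcont : ContinuousWithinAt v (Iio t) t :=
    (continuousWithinAt_Ioo_iff_Iio ht).1 <| (hv.continuousOn t right_mem_uIcc).mono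
      (Ioo_subset_Icc_self.trans Icc_subset_uIcc)
  have hint_early : ∀ c < t, IntegrableOn (fun s => deriv v s * (t - s) ^ (-α)) (Ioo 0 c) :=
    fun c hc => ((hv.integrableOn_deriv_Ioo ht.le).mono_set (Ioo_subset_Ioo_right hc.le))
      |>.mul_continuousOn_of_subset (continuousOn_sub_rpow _ fun x hx => hx.2.trans_lt hc)
        measurableSet_Ioo isCompact_Icc Ioo_subset_Icc_self
  have hint_v : ¬ IntegrableOn (fun s => v s * (deriv v s * (t - s) ^ (-α))) (Ioo 0 t) :=
    fun h => hint <| IntegrableOn.of_mul_left_of_ne_zero hcont hvt (by fun_prop) hint_early h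
  rw [hsq, integral_undef hint_v]
  norm_num

theorem caputo_sq_inequality_general
    (α T : ℝ) (hα : 0 < α) (hα1 : α < 1)
    (v : ℝ → ℝ) (hv : AbsCont v T) :
    ∀ t, 0 < t → t ≤ T →
      (1 / 2) * caputo α (fun s => v s ^ 2) t ≤ v t * caputo α v t := by
  intro t ht htT
  have hv_ac : AbsolutelyContinuousOnInterval v 0 t :=
    (hv.absolutelyContinuousOnInterval (ht.le.trans htT)).mono
      (uIcc_subset_uIcc left_mem_uIcc (mem_uIcc_of_le ht.le htT))
  have hΓ : 0 ≤ 1 / Gamma (1 - α) := (one_div_pos.2 (Gamma_pos_of_pos (by linarith))).le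
  have key := mul_le_mul_of_nonneg_left (half_setIntegral_deriv_sq_mul_rpow_le hα.le ht hv_ac) hΓ
  unfold caputo
  linarith

/-- Lemma 2.1 / Alikhanov's inequality: for `0 < α < 1` and `v` absolutely
continuous on `[0,T]`, `v(t) ∂_t^α v(t) ≥ (1/2) ∂_t^α (v²)(t)` for all `t ∈ (0,T]`. -/
theorem caputo_sq_inequality
    (α T : ℝ) (hα : 0 < α) (hα1 : α < 1) (hT : 0 < T)
    (v : ℝ → ℝ) (hv : AbsCont v T) :
    ∀ t, 0 < t → t ≤ T →
      (1 / 2) * caputo α (fun s => v s ^ 2) t ≤ v t * caputo α v t :=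
  caputo_sq_inequality_general α T hα hα1 v hv
end
end

section
/- Let 0 < α < 1, T > 0 and b, c₁ > 0. Suppose y : [0,T] → ℝ is nonnegative, absolutely continuous, and satisfies ∂_t^α y(t) + c₁ y(t) ≤ b for almost all t ∈ [0,T]. Then y(t) ≤ y(0) + b T^α / (α Γ(α)) for all t ∈ [0,T]. -/
open MeasureTheory Real Filter
open scoped ENNReal

noncomputable section

lemma beta01 {α : ℝ} (hα : 0 < α) (hα1 : α < 1) :
    ∫ x in (0:ℝ)..1, x ^ (-α) * (1 - x) ^ (α - 1) = Real.Gamma (1 - α) * Real.Gamma α := by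
  have h1 : (0:ℝ) < 1 - α := by linarith
  have hC : Complex.Gamma (1 - α) * Complex.Gamma α
      = Complex.betaIntegral (1 - α) α := by
    have := Complex.Gamma_mul_Gamma_eq_betaIntegral
      (s := (1 - α : ℝ)) (t := (α : ℝ)) (by simpa using h1) (by simpa using hα)
    push_cast at this
    rw [this]
    norm_num [Complex.Gamma_one]
  have hinteg : ((∫ x in (0:ℝ)..1, x ^ (-α) * (1 - x) ^ (α - 1) : ℝ) : ℂ)
      = Complex.betaIntegral (1 - α) α := by
    rw [← intervalIntegral.integral_ofReal, Complex.betaIntegral]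
    refine intervalIntegral.integral_congr fun x hx => ?_
    rw [Set.uIcc_of_le (by norm_num : (0:ℝ) ≤ 1)] at hx
    push_cast
    rw [Complex.ofReal_cpow hx.1, Complex.ofReal_cpow (by linarith [hx.2] : (0:ℝ) ≤ 1 - x)]
    push_cast
    ring_nf
  have h2 : ((Real.Gamma (1-α) * Real.Gamma α : ℝ) : ℂ)
      = Complex.Gamma (1 - (α:ℂ)) * Complex.Gamma α := by
    push_cast [← Complex.Gamma_ofReal]
    norm_num
  exact_mod_cast hinteg.trans (hC.symm.trans h2.symm)

lemma beta_rt {α r t : ℝ} (hα : 0 < α) (hα1 : α < 1) (hrt : r < t) :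
    ∫ s in r..t, (s - r) ^ (-α) * (t - s) ^ (α - 1) = Real.Gamma (1 - α) * Real.Gamma α := by
  have hc : (0:ℝ) < t - r := by linarith
  have h1 : (∫ s in r..t, (s - r) ^ (-α) * (t - s) ^ (α - 1))
      = ∫ x in (0:ℝ)..(t - r), x ^ (-α) * ((t - r) - x) ^ (α - 1) := by
    rw [show (∫ s in r..t, (s - r) ^ (-α) * (t - s) ^ (α - 1))
        = ∫ s in r..t, (fun x => x ^ (-α) * ((t - r) - x) ^ (α - 1)) (s - r) from
      intervalIntegral.integral_congr fun s _ => by simp only []; congr 1; ring,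
      intervalIntegral.integral_comp_sub_right (fun x => x ^ (-α) * ((t - r) - x) ^ (α - 1)) r]
    norm_num
  rw [h1]
  have h2 : (∫ x in (0:ℝ)..(t - r), x ^ (-α) * ((t - r) - x) ^ (α - 1))
      = (t - r) • ∫ u in (0:ℝ)..1, ((t-r) * u) ^ (-α) * ((t - r) - (t-r) * u) ^ (α - 1) := by
    rw [intervalIntegral.smul_integral_comp_mul_left
      (fun x => x ^ (-α) * ((t - r) - x) ^ (α - 1)) (t - r)]
    norm_num
  rw [h2, ← beta01 hα hα1]
  have h3 : ∀ u ∈ Set.uIcc (0:ℝ) 1,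
      ((t-r) * u) ^ (-α) * ((t - r) - (t-r) * u) ^ (α - 1)
        = (t - r)⁻¹ * (u ^ (-α) * (1 - u) ^ (α - 1)) := by
    intro u hu
    rw [Set.uIcc_of_le (by norm_num : (0:ℝ) ≤ 1)] at hu
    have h4 : (t - r) - (t - r) * u = (t - r) * (1 - u) := by ring
    rw [h4, Real.mul_rpow hc.le hu.1, Real.mul_rpow hc.le (by linarith [hu.2])]
    rw [show (t-r) ^ (-α) * u ^ (-α) * ((t-r) ^ (α-1) * (1-u) ^ (α-1))
        = ((t-r) ^ (-α) * (t-r) ^ (α-1)) * (u ^ (-α) * (1-u) ^ (α-1)) by ring]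
    rw [← Real.rpow_add hc, show -α + (α - 1) = -1 by ring, Real.rpow_neg_one]
  rw [intervalIntegral.integral_congr h3, intervalIntegral.integral_const_mul]
  rw [smul_eq_mul, ← mul_assoc, mul_inv_cancel₀ (ne_of_gt hc), one_mul]

lemma beta_integrable {α r t : ℝ} (hα : 0 < α) (hα1 : α < 1) (hrt : r < t) :
    IntervalIntegrable (fun s => (s - r) ^ (-α) * (t - s) ^ (α - 1)) volume r t := by
  have hm1 : r < (r + t) / 2 := by linarith
  have hm2 : (r + t) / 2 < t := by linarith
  have i1 : IntervalIntegrable (fun s => (s - r) ^ (-α)) volume r ((r+t)/2) := by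
    rw [show (r+t)/2 = (t - r)/2 + r by ring]
    have := (intervalIntegral.intervalIntegrable_rpow' (a := 0) (b := (t - r)/2)
      (r := -α) (by linarith)).comp_sub_right r
    simpa using this
  have i2 : IntervalIntegrable (fun s => (t - s) ^ (α - 1)) volume ((r+t)/2) t := by
    rw [show (r+t)/2 = t - (t - r)/2 by ring]
    have := (intervalIntegral.intervalIntegrable_rpow' (a := 0) (b := (t - r)/2)
      (r := α - 1) (by linarith)).comp_sub_left t
    simpa using this.symm
  have c1 : ContinuousOn (fun s => (t - s) ^ (α - 1)) (Set.uIcc r ((r+t)/2)) := by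
    refine ContinuousOn.rpow_const (by fun_prop) fun s hs => Or.inl ?_
    rw [Set.uIcc_of_le hm1.le] at hs
    have := hs.2
    intro h
    simp only [sub_eq_zero] at h
    linarith
  have c2 : ContinuousOn (fun s => (s - r) ^ (-α)) (Set.uIcc ((r+t)/2) t) := by
    refine ContinuousOn.rpow_const (by fun_prop) fun s hs => Or.inl ?_
    rw [Set.uIcc_of_le hm2.le] at hs
    have := hs.1
    intro h
    simp only [sub_eq_zero] at h
    linarith
  exact (i1.mul_continuousOn c1).trans (i2.continuousOn_mul c2)

/-- Lemma 2.7, fractional Gronwall-type estimate: if `y ≥ 0` is absolutely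
continuous on `[0,T]` and `∂_t^α y(t) + c₁ y(t) ≤ b` for a.e. `t ∈ [0,T]`, then
`y(t) ≤ y(0) + b T^α/(α Γ(α))` on `[0,T]`. -/
theorem fractional_gronwall
    (α T b c₁ : ℝ) (hα : 0 < α) (hα1 : α < 1) (hT : 0 < T) (hb : 0 < b) (hc : 0 < c₁)
    (y : ℝ → ℝ) (hypos : ∀ t ∈ Set.Icc (0:ℝ) T, 0 ≤ y t) (hAC : AbsCont y T)
    (hineq : ∀ᵐ t ∂(volume.restrict (Set.Icc (0:ℝ) T)), caputo α y t + c₁ * y t ≤ b) :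
    ∀ t ∈ Set.Icc (0:ℝ) T, y t ≤ y 0 + b * T ^ α / (α * Real.Gamma α) := by
  have hGα : 0 < Real.Gamma α := Real.Gamma_pos_of_pos hα
  have hG1α : 0 < Real.Gamma (1 - α) := Real.Gamma_pos_of_pos (by linarith)
  have hTα : 0 < T ^ α := Real.rpow_pos_of_pos hT α
  have hpos : 0 < b * T ^ α / (α * Real.Gamma α) := by positivity
  intro t ht
  obtain ⟨ht0, htT⟩ := ht
  rcases eq_or_lt_of_le ht0 with h0 | h0
  · rw [← h0]; linarith
  set C := Real.Gamma (1 - α) * Real.Gamma α with hCdef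
  set w : ℝ → ℝ := fun s => (t - s) ^ (α - 1) with hwdef
  set dy := deriv y with hdydef
  set μ := volume.restrict (Set.Ioo (0:ℝ) t) with hμdef
  have hIooIcc : Set.Ioo (0:ℝ) t ⊆ Set.Icc 0 T := fun s hs => ⟨hs.1.le, hs.2.le.trans htT⟩
  have hdyint : IntegrableOn dy (Set.Ioo 0 t) := hAC.1.mono_set hIooIcc
  set F : ℝ → ℝ → ℝ :=
    fun r s => if r < s then dy r * ((s - r) ^ (-α) * (t - s) ^ (α - 1)) else 0 with hFdef
  -- measurability
  have hFmeas : Measurable (Function.uncurry F) := by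
    have hr1 : Measurable fun u : ℝ => u ^ (-α) := by measurability
    have hr2 : Measurable fun u : ℝ => u ^ (α - 1) := by measurability
    apply Measurable.ite (measurableSet_lt measurable_fst measurable_snd)
    · exact ((measurable_deriv y).comp measurable_fst).mul
        ((hr1.comp (measurable_snd.sub measurable_fst)).mul
          (hr2.comp (measurable_const.sub measurable_snd)))
    · exact measurable_const
  -- facts for fixed r
  have key_r : ∀ r ∈ Set.Ioo (0:ℝ) t,
      (∫ s, F r s ∂μ) = dy r * C ∧ (∫ s, |F r s| ∂μ) = |dy r| * C ∧ Integrable (F r) μ := by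
    intro r hr
    have hrt : r < t := hr.2
    have hbeta_set : (∫ s in Set.Ioo r t, (s - r) ^ (-α) * (t - s) ^ (α - 1)) = C := by
      rw [← MeasureTheory.integral_Ioc_eq_integral_Ioo,
        ← intervalIntegral.integral_of_le hrt.le, beta_rt hα hα1 hrt]
    have hinterIoi : Set.Ioo (0:ℝ) t ∩ Set.Ioi r = Set.Ioo r t := by
      rw [Set.Ioo_inter_Ioi, max_eq_right hr.1.le]
    have hbetaint : IntegrableOn (fun s => (s - r) ^ (-α) * (t - s) ^ (α - 1))
        (Set.Ioo r t) := by
      rw [← intervalIntegrable_iff_integrableOn_Ioo_of_le hrt.le]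
      exact beta_integrable hα hα1 hrt
    refine ⟨?_, ?_, ?_⟩
    · have hind : F r = (Set.Ioi r).indicator
          (fun s => dy r * ((s - r) ^ (-α) * (t - s) ^ (α - 1))) := by
        funext s
        by_cases h : r < s <;> simp [F, Set.indicator, Set.mem_Ioi, h]
      rw [hμdef, hind, MeasureTheory.setIntegral_indicator measurableSet_Ioi, hinterIoi,
        MeasureTheory.integral_const_mul, hbeta_set]
    · have hind2 : Set.EqOn (fun s => |F r s|) ((Set.Ioi r).indicator
          (fun s => |dy r| * ((s - r) ^ (-α) * (t - s) ^ (α - 1)))) (Set.Ioo 0 t) := by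
        intro s hs
        by_cases h : r < s
        · have h1 : (0:ℝ) ≤ (s - r) ^ (-α) := Real.rpow_nonneg (by linarith) _
          have h2 : (0:ℝ) ≤ (t - s) ^ (α - 1) := Real.rpow_nonneg (by linarith [hs.2]) _
          simp [F, Set.indicator, Set.mem_Ioi, h, abs_mul,
            abs_of_nonneg (mul_nonneg h1 h2)]
        · simp [F, Set.indicator, Set.mem_Ioi, h]
      rw [hμdef, MeasureTheory.setIntegral_congr_fun measurableSet_Ioo hind2,
        MeasureTheory.setIntegral_indicator measurableSet_Ioi, hinterIoi,
        MeasureTheory.integral_const_mul, hbeta_set]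
    · have hind : F r = (Set.Ioi r).indicator
          (fun s => dy r * ((s - r) ^ (-α) * (t - s) ^ (α - 1))) := by
        funext s
        by_cases h : r < s <;> simp [F, Set.indicator, Set.mem_Ioi, h]
      rw [hind, hμdef, integrable_indicator_iff measurableSet_Ioi]
      rw [IntegrableOn, Measure.restrict_restrict measurableSet_Ioi, Set.inter_comm, hinterIoi]
      exact hbetaint.const_mul (dy r)
  -- product integrability
  have hFprod : Integrable (Function.uncurry F) (μ.prod μ) := by
    refine (MeasureTheory.integrable_prod_iff hFmeas.aestronglyMeasurable).2 ⟨?_, ?_⟩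
    · filter_upwards [ae_restrict_mem measurableSet_Ioo] with r hr
      exact (key_r r hr).2.2
    · refine ((hdyint.norm).mul_const C).congr ?_
      filter_upwards [ae_restrict_mem measurableSet_Ioo] with r hr
      simp only [Real.norm_eq_abs]
      exact ((key_r r hr).2.1).symm
  have hswap := MeasureTheory.integral_integral_swap (f := F) hFprod
  -- LHS value
  have hyt : (∫ r in Set.Ioo (0:ℝ) t, dy r) = y t - y 0 := by
    have h := hAC.2 t ⟨ht0, htT⟩
    rw [intervalIntegral.integral_of_le h0.le, MeasureTheory.integral_Ioc_eq_integral_Ioo] at h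
    rw [← hdydef] at h
    linarith
  have hLHS : (∫ r, (∫ s, F r s ∂μ) ∂μ) = C * (y t - y 0) := by
    rw [hμdef, MeasureTheory.setIntegral_congr_fun measurableSet_Ioo
      (fun r hr => (key_r r hr).1), MeasureTheory.integral_mul_const, hyt, mul_comm]
  -- RHS pointwise
  have hRHSpt : ∀ s ∈ Set.Ioo (0:ℝ) t,
      (∫ r, F r s ∂μ) = Real.Gamma (1 - α) * (caputo α y s * w s) := by
    intro s hs
    have hind : (fun r => F r s) = (Set.Iio s).indicator
        (fun r => (dy r * (s - r) ^ (-α)) * w s) := by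
      funext r
      by_cases h : r < s <;> simp [F, Set.indicator, Set.mem_Iio, h, w, mul_assoc]
    rw [hμdef, hind, MeasureTheory.setIntegral_indicator measurableSet_Iio,
      Set.Ioo_inter_Iio, min_eq_right hs.2.le, MeasureTheory.integral_mul_const]
    have hcap : caputo α y s
        = (1 / Real.Gamma (1 - α)) * ∫ r in Set.Ioo (0:ℝ) s, dy r * (s - r) ^ (-α) := rfl
    rw [hcap]
    field_simp
  have hRHS : (∫ s, (∫ r, F r s ∂μ) ∂μ)
      = ∫ s in Set.Ioo (0:ℝ) t, Real.Gamma (1 - α) * (caputo α y s * w s) := by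
    rw [hμdef]
    exact MeasureTheory.setIntegral_congr_fun measurableSet_Ioo fun s hs => hRHSpt s hs
  -- the key identity
  have hkey : (∫ s in Set.Ioo (0:ℝ) t, caputo α y s * w s)
      = Real.Gamma α * (y t - y 0) := by
    have h1 : Real.Gamma (1 - α) * (∫ s in Set.Ioo (0:ℝ) t, caputo α y s * w s)
        = C * (y t - y 0) := by
      rw [← MeasureTheory.integral_const_mul, ← hRHS, ← hswap, hLHS]
    rw [hCdef, mul_assoc] at h1
    exact mul_left_cancel₀ (ne_of_gt hG1α) h1
  -- integrability of caputo * w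
  have hcwint : Integrable (fun s => caputo α y s * w s) μ := by
    have h1 : Integrable (fun s => ∫ r, F r s ∂μ) μ := hFprod.integral_prod_right
    have h2 : Integrable (fun s => Real.Gamma (1 - α) * (caputo α y s * w s)) μ := by
      refine h1.congr ?_
      filter_upwards [ae_restrict_mem measurableSet_Ioo] with s hs
      exact hRHSpt s hs
    have h3 := h2.const_mul (Real.Gamma (1 - α))⁻¹
    refine h3.congr (Eventually.of_forall fun s => ?_)
    field_simp
  -- integrability of w
  have hwint : Integrable w μ := by
    rw [hμdef, ← IntegrableOn, ← intervalIntegrable_iff_integrableOn_Ioo_of_le h0.le]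
    have := (intervalIntegral.intervalIntegrable_rpow' (a := 0) (b := t)
      (r := α - 1) (by linarith)).comp_sub_left t
    simpa using this.symm
  -- a.e. bound
  have hae : ∀ᵐ s ∂μ, caputo α y s * w s ≤ b * w s := by
    have h1 : ∀ᵐ s ∂μ, caputo α y s + c₁ * y s ≤ b :=
      ae_restrict_of_ae_restrict_of_subset hIooIcc hineq
    filter_upwards [h1, ae_restrict_mem measurableSet_Ioo] with s hs1 hs2
    have hys : 0 ≤ y s := hypos s (hIooIcc hs2)
    have hcap : caputo α y s ≤ b := by nlinarith
    have hwnn : 0 ≤ w s := Real.rpow_nonneg (by linarith [hs2.2]) _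
    exact mul_le_mul_of_nonneg_right hcap hwnn
  -- integral of w
  have hwval : (∫ s, w s ∂μ) = t ^ α / α := by
    rw [hμdef, ← MeasureTheory.integral_Ioc_eq_integral_Ioo,
      ← intervalIntegral.integral_of_le h0.le, hwdef]
    have h1 : (∫ s in (0:ℝ)..t, (t - s) ^ (α - 1))
        = ∫ x in (t - t)..(t - 0), x ^ (α - 1) :=
      intervalIntegral.integral_comp_sub_left (fun x => x ^ (α - 1)) t
    rw [h1, sub_self, sub_zero,
      integral_rpow (Or.inl (by linarith : (-1:ℝ) < α - 1)),
      show α - 1 + 1 = α by ring, Real.zero_rpow (ne_of_gt hα), sub_zero]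
  -- conclude
  have hmono := MeasureTheory.integral_mono_ae hcwint (hwint.const_mul b) hae
  rw [MeasureTheory.integral_const_mul, hwval] at hmono
  have hkey' : Real.Gamma α * (y t - y 0) ≤ b * (t ^ α / α) := by
    rw [← hkey]; exact hmono
  have htT' : t ^ α ≤ T ^ α := Real.rpow_le_rpow h0.le htT hα.le
  have h6 : y t - y 0 ≤ b * (t ^ α / α) / Real.Gamma α :=
    (le_div_iff₀ hGα).2 (by rw [mul_comm]; exact hkey')
  have h7 : b * (t ^ α / α) / Real.Gamma α ≤ b * T ^ α / (α * Real.Gamma α) := by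
    rw [show b * (t ^ α / α) / Real.Gamma α = b * t ^ α / (α * Real.Gamma α) by
      field_simp]
    gcongr
  linarith
end
end

section
/- Let 0 < α < 2. Then there exists a constant C > 0 such that for all w ≥ 0 and all t ≥ 0, E_α(w t^α) ≤ C e^{w^{1/α} t}, where E_α(z) = ∑_{k=0}^∞ z^k / Γ(αk + 1) is the Mittag-Leffler function. -/
open MeasureTheory Real Filter
open scoped ENNReal

noncomputable section

/-- The Mittag-Leffler function `E_α(z) = ∑_{k=0}^∞ z^k / Γ(αk + 1)`. -/
def mittagLeffler (α z : ℝ) : ℝ := ∑' n : ℕ, z ^ n / Real.Gamma (α * n + 1)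

/-- Lower bound A: for `1 ≤ n ≤ s`, `Γ(s+1) ≥ n! * n^(s-n)`. -/
lemma gamma_lb_A (n : ℕ) (hn : 1 ≤ n) (s : ℝ) (hns : (n : ℝ) ≤ s) :
    (n.factorial : ℝ) * (n : ℝ) ^ (s - n) ≤ Real.Gamma (s + 1) := by
  have hnpos : (0 : ℝ) < n := by exact_mod_cast hn
  rcases eq_or_lt_of_le hns with h | h
  · rw [← h]
    simp [Real.rpow_zero, Real.Gamma_nat_eq_factorial]
  · have hx : (n : ℝ) ∈ Set.Ioi (0 : ℝ) := hnpos
    have hz : s + 1 ∈ Set.Ioi (0 : ℝ) := by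
      simp only [Set.mem_Ioi]; linarith
    have hxy : (n : ℝ) < n + 1 := by linarith
    have hyz : (n : ℝ) + 1 < s + 1 := by linarith
    have hslope := Real.convexOn_log_Gamma.slope_mono_adjacent hx hz hxy hyz
    have hΓn : Real.Gamma ((n : ℝ) + 1) = n.factorial := Real.Gamma_nat_eq_factorial n
    have hΓrec : Real.Gamma ((n : ℝ) + 1) = n * Real.Gamma n :=
      Real.Gamma_add_one (ne_of_gt hnpos)
    have hΓposn : 0 < Real.Gamma (n : ℝ) := Real.Gamma_pos_of_pos hnpos
    have hΓposs : 0 < Real.Gamma (s + 1) := Real.Gamma_pos_of_pos (by linarith)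
    simp only [Function.comp] at hslope
    have h1 : ((n : ℝ) + 1) - n = 1 := by ring
    have h2 : (s + 1) - ((n : ℝ) + 1) = s - n := by ring
    rw [h1, h2, div_one] at hslope
    have hlogn : Real.log (Real.Gamma ((n:ℝ) + 1)) - Real.log (Real.Gamma (n:ℝ))
        = Real.log n := by
      rw [hΓrec, Real.log_mul (ne_of_gt hnpos) (ne_of_gt hΓposn)]
      ring
    rw [hlogn] at hslope
    have hsn : (0 : ℝ) < s - n := by linarith
    rw [le_div_iff₀ hsn] at hslope
    -- hslope : log n * (s - n) ≤ log Γ(s+1) - log Γ(n+1)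
    have hgoal : Real.log ((n.factorial : ℝ) * (n : ℝ) ^ (s - n))
        ≤ Real.log (Real.Gamma (s + 1)) := by
      rw [Real.log_mul (by positivity) (by positivity),
        Real.log_rpow hnpos]
      rw [hΓn] at hslope
      linarith
    have hpos : (0 : ℝ) < (n.factorial : ℝ) * (n : ℝ) ^ (s - n) := by positivity
    calc (n.factorial : ℝ) * (n : ℝ) ^ (s - n)
        = Real.exp (Real.log ((n.factorial : ℝ) * (n : ℝ) ^ (s - n))) :=
          (Real.exp_log hpos).symm
      _ ≤ Real.exp (Real.log (Real.Gamma (s + 1))) := Real.exp_le_exp.mpr hgoal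
      _ = Real.Gamma (s + 1) := Real.exp_log hΓposs

/-- Lower bound B: for `-1 < s < n+1`, `Γ(s+1) ≥ (n+1)! * (n+2)^(s-(n+1))`. -/
lemma gamma_lb_B (n : ℕ) (s : ℝ) (h0 : -1 < s) (h1 : s < (n : ℝ) + 1) :
    ((n + 1).factorial : ℝ) * ((n : ℝ) + 2) ^ (s - ((n : ℝ) + 1)) ≤ Real.Gamma (s + 1) := by
  have hx : s + 1 ∈ Set.Ioi (0 : ℝ) := by simp only [Set.mem_Ioi]; linarith
  have hz : (n : ℝ) + 3 ∈ Set.Ioi (0 : ℝ) := by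
    simp only [Set.mem_Ioi]; positivity
  have hxy : s + 1 < (n : ℝ) + 2 := by linarith
  have hyz : (n : ℝ) + 2 < (n : ℝ) + 3 := by linarith
  have hslope := Real.convexOn_log_Gamma.slope_mono_adjacent hx hz hxy hyz
  simp only [Function.comp] at hslope
  have hn2pos : (0 : ℝ) < (n : ℝ) + 2 := by positivity
  have hΓ2 : Real.Gamma ((n : ℝ) + 2) = (n + 1).factorial := by
    have := Real.Gamma_nat_eq_factorial (n + 1)
    rw [show ((n:ℝ) + 2) = ((n + 1 : ℕ) : ℝ) + 1 by push_cast; ring, this]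
  have hΓ3 : Real.Gamma ((n : ℝ) + 3) = ((n : ℝ) + 2) * Real.Gamma ((n : ℝ) + 2) := by
    have := Real.Gamma_add_one (s := (n : ℝ) + 2) (ne_of_gt hn2pos)
    rw [show ((n:ℝ) + 3) = ((n:ℝ) + 2) + 1 by ring, this]
  have hΓ2pos : 0 < Real.Gamma ((n : ℝ) + 2) := Real.Gamma_pos_of_pos (by positivity)
  have hΓspos : 0 < Real.Gamma (s + 1) := Real.Gamma_pos_of_pos (by linarith)
  have hrhs : Real.log (Real.Gamma ((n:ℝ) + 3)) - Real.log (Real.Gamma ((n:ℝ) + 2))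
      = Real.log ((n : ℝ) + 2) := by
    rw [hΓ3, Real.log_mul (ne_of_gt hn2pos) (ne_of_gt hΓ2pos)]; ring
  have h3 : (n : ℝ) + 3 - ((n : ℝ) + 2) = 1 := by ring
  rw [h3, div_one, hrhs] at hslope
  have hd : (0 : ℝ) < (n : ℝ) + 2 - (s + 1) := by linarith
  rw [div_le_iff₀ hd] at hslope
  -- hslope : log Γ(n+2) - log Γ(s+1) ≤ log(n+2) * (n+2-(s+1))
  have hgoal : Real.log (((n + 1).factorial : ℝ) * ((n : ℝ) + 2) ^ (s - ((n : ℝ) + 1)))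
      ≤ Real.log (Real.Gamma (s + 1)) := by
    rw [Real.log_mul (by positivity) (by positivity), Real.log_rpow hn2pos]
    rw [hΓ2] at hslope
    nlinarith [hslope]
  have hpos : (0 : ℝ) < ((n + 1).factorial : ℝ) * ((n : ℝ) + 2) ^ (s - ((n : ℝ) + 1)) := by
    positivity
  calc ((n + 1).factorial : ℝ) * ((n : ℝ) + 2) ^ (s - ((n : ℝ) + 1))
      = Real.exp (Real.log _) := (Real.exp_log hpos).symm
    _ ≤ Real.exp (Real.log (Real.Gamma (s + 1))) := Real.exp_le_exp.mpr hgoal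
    _ = Real.Gamma (s + 1) := Real.exp_log hΓspos

/-- Key pointwise bound: `x^s / Γ(s+1) ≤ 3 (x^⌊s⌋/⌊s⌋! + x^(⌊s⌋+1)/(⌊s⌋+1)!)`. -/
lemma key_bound (s x : ℝ) (hs : 0 ≤ s) (hx : 0 ≤ x) :
    x ^ s / Real.Gamma (s + 1) ≤
      3 * (x ^ (⌊s⌋₊) / (Nat.factorial ⌊s⌋₊) + x ^ (⌊s⌋₊ + 1) / (Nat.factorial (⌊s⌋₊ + 1))) := by
  set n := ⌊s⌋₊ with hn
  have hns : (n : ℝ) ≤ s := Nat.floor_le hs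
  have hsn1 : s < (n : ℝ) + 1 := by exact_mod_cast Nat.lt_floor_add_one s
  have hΓpos : 0 < Real.Gamma (s + 1) := Real.Gamma_pos_of_pos (by linarith)
  have hfac1 : (0:ℝ) < (Nat.factorial n : ℝ) := by positivity
  have hfac2 : (0:ℝ) < (Nat.factorial (n+1) : ℝ) := by positivity
  have hterm1 : (0:ℝ) ≤ x ^ n / (Nat.factorial n : ℝ) := by positivity
  have hterm2 : (0:ℝ) ≤ x ^ (n+1) / (Nat.factorial (n+1) : ℝ) := by positivity
  rcases eq_or_lt_of_le hx with hx0 | hxpos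
  · -- x = 0
    rcases eq_or_lt_of_le hs with hs0 | hspos
    · -- s = 0, n = 0
      have hn0 : n = 0 := by simp [hn, ← hs0]
      rw [← hs0, ← hx0, hn0]
      simp [Real.Gamma_one, Nat.factorial]
    · rw [← hx0, Real.zero_rpow (ne_of_gt hspos)]
      rw [zero_div]
      positivity
  · -- x > 0
    rcases Nat.eq_zero_or_pos n with hn0 | hn1
    · -- n = 0 : s ∈ [0,1), Γ(s+1) ≥ 1/2, x^s ≤ 1+x
      have hs1 : s < 1 := by
        have := hsn1
        rw [hn0] at this
        simpa using this
      have hΓhalf : (1:ℝ)/2 ≤ Real.Gamma (s + 1) := by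
        have hB := gamma_lb_B 0 s (by linarith) (by norm_num; linarith)
        norm_num at hB
        have h2 : (2:ℝ)^(-1:ℝ) ≤ (2:ℝ) ^ (s - 1) :=
          Real.rpow_le_rpow_of_exponent_le one_le_two (by linarith)
        have h2' : (2:ℝ)^(-1:ℝ) = 1/2 := by
          rw [Real.rpow_neg_one]; norm_num
        rw [h2'] at h2
        exact h2.trans hB
      have hxs : x ^ s ≤ 1 + x := by
        rcases le_or_gt x 1 with hx1 | hx1
        · have := Real.rpow_le_one hx hx1 hs
          linarith
        · have h1 : x ^ s ≤ x ^ (1:ℝ) :=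
            Real.rpow_le_rpow_of_exponent_le hx1.le (by linarith)
          rw [Real.rpow_one] at h1
          linarith
      have hxs0 : 0 ≤ x ^ s := Real.rpow_nonneg hx s
      have hstep : x ^ s / Real.Gamma (s+1) ≤ 2 * (1 + x) := by
        rw [div_le_iff₀ hΓpos]
        have hmul : 2 * (1+x) * (1/2) ≤ 2 * (1+x) * Real.Gamma (s+1) :=
          mul_le_mul_of_nonneg_left hΓhalf (by linarith)
        nlinarith [hmul]
      have hrhs : 3 * (x ^ n / (Nat.factorial n : ℝ) + x ^ (n+1) / (Nat.factorial (n+1) : ℝ))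
          = 3 * (1 + x) := by
        rw [hn0]
        norm_num [Nat.factorial]
      rw [hrhs]
      linarith
    · -- n ≥ 1
      have hnRpos : (0:ℝ) < n := by exact_mod_cast hn1
      have hA := gamma_lb_A n hn1 s hns
      rcases le_or_gt x n with hxn | hxn
      · -- x ≤ n : x^s ≤ x^n * n^(s-n) / ... gives x^s/Γ ≤ x^n/n!
        have hx1 : x ^ s ≤ x ^ (n:ℕ) * (n:ℝ) ^ (s - n) := by
          have : x ^ s = x ^ (n:ℝ) * x ^ (s - n) := by
            rw [← Real.rpow_add hxpos]; ring_nf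
          rw [this, Real.rpow_natCast]
          apply mul_le_mul_of_nonneg_left
          · exact Real.rpow_le_rpow hx hxn (by linarith)
          · positivity
        have : x ^ s / Real.Gamma (s+1) ≤ x ^ (n:ℕ) / (Nat.factorial n : ℝ) := by
          rw [div_le_div_iff₀ hΓpos hfac1]
          calc x ^ s * (Nat.factorial n : ℝ)
              ≤ (x ^ (n:ℕ) * (n:ℝ) ^ (s - n)) * (Nat.factorial n : ℝ) := by
                apply mul_le_mul_of_nonneg_right hx1 (le_of_lt hfac1)
            _ = x ^ (n:ℕ) * ((Nat.factorial n : ℝ) * (n:ℝ) ^ (s - n)) := by ring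
            _ ≤ x ^ (n:ℕ) * Real.Gamma (s + 1) := by
                apply mul_le_mul_of_nonneg_left hA (by positivity)
        linarith
      · rcases le_or_gt ((n:ℝ) + 2) x with hxn2 | hxn2
        · -- x ≥ n+2 : use B
          have hB := gamma_lb_B n s (by linarith) hsn1
          have hx1 : x ^ s ≤ x ^ (n+1:ℕ) * ((n:ℝ)+2) ^ (s - ((n:ℝ)+1)) := by
            have hsplit : x ^ ((n:ℝ)+1) = x ^ s * x ^ (((n:ℝ)+1) - s) := by
              rw [← Real.rpow_add hxpos]; ring_nf
            have hcmp : ((n:ℝ)+2) ^ (((n:ℝ)+1) - s) ≤ x ^ (((n:ℝ)+1) - s) :=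
              Real.rpow_le_rpow (by positivity) hxn2 (by linarith)
            have hinv : ((n:ℝ)+2) ^ (s - ((n:ℝ)+1)) * ((n:ℝ)+2) ^ (((n:ℝ)+1) - s) = 1 := by
              rw [← Real.rpow_add (by positivity)]; norm_num
            have hxnat : x ^ (n+1:ℕ) = x ^ ((n:ℝ)+1) := by
              rw [← Real.rpow_natCast x (n+1)]; push_cast; ring_nf
            rw [hxnat, hsplit]
            calc x ^ s = x ^ s * (((n:ℝ)+2) ^ (s - ((n:ℝ)+1)) * ((n:ℝ)+2) ^ (((n:ℝ)+1) - s)) := by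
                  rw [hinv, mul_one]
              _ = (x ^ s * ((n:ℝ)+2) ^ (((n:ℝ)+1) - s)) * ((n:ℝ)+2) ^ (s - ((n:ℝ)+1)) := by ring
              _ ≤ (x ^ s * x ^ (((n:ℝ)+1) - s)) * ((n:ℝ)+2) ^ (s - ((n:ℝ)+1)) := by
                  apply mul_le_mul_of_nonneg_right _ (by positivity)
                  exact mul_le_mul_of_nonneg_left hcmp (Real.rpow_nonneg hx s)
          have : x ^ s / Real.Gamma (s+1) ≤ x ^ (n+1:ℕ) / (Nat.factorial (n+1) : ℝ) := by
            rw [div_le_div_iff₀ hΓpos hfac2]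
            calc x ^ s * (Nat.factorial (n+1) : ℝ)
                ≤ (x ^ (n+1:ℕ) * ((n:ℝ)+2) ^ (s - ((n:ℝ)+1))) * (Nat.factorial (n+1) : ℝ) :=
                  mul_le_mul_of_nonneg_right hx1 (le_of_lt hfac2)
              _ = x ^ (n+1:ℕ) * ((Nat.factorial (n+1) : ℝ) * ((n:ℝ)+2) ^ (s - ((n:ℝ)+1))) := by
                  ring
              _ ≤ x ^ (n+1:ℕ) * Real.Gamma (s + 1) := by
                  apply mul_le_mul_of_nonneg_left _ (by positivity)
                  exact_mod_cast hB
          linarith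
        · -- n < x < n+2 : use A with (x/n)^(s-n) ≤ x/n ≤ 3
          have hx1 : x ^ s ≤ 3 * (x ^ (n:ℕ) * (n:ℝ) ^ (s - n)) := by
            have hsplit : x ^ s = x ^ (n:ℕ) * x ^ (s - n) := by
              rw [← Real.rpow_natCast x n, ← Real.rpow_add hxpos]
              ring_nf
            have hratio : x ^ (s - n) ≤ 3 * (n:ℝ) ^ (s - n) := by
              have hdiv : (1:ℝ) ≤ x / n := by
                rw [le_div_iff₀ hnRpos]; linarith
              have h1 : (x / n) ^ (s - n) ≤ (x / n) ^ (1:ℝ) :=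
                Real.rpow_le_rpow_of_exponent_le hdiv (by linarith)
              rw [Real.rpow_one] at h1
              have h2 : x / n ≤ 3 := by
                rw [div_le_iff₀ hnRpos]
                have : (1:ℝ) ≤ n := by exact_mod_cast hn1
                linarith
              have h3 : (x / n) ^ (s - n) = x ^ (s-n) / (n:ℝ) ^ (s-n) :=
                Real.div_rpow hx (le_of_lt hnRpos) _
              rw [h3] at h1
              have h4 : x ^ (s-n) / (n:ℝ) ^ (s-n) ≤ 3 := le_trans h1 h2
              have h5 : (0:ℝ) < (n:ℝ) ^ (s-n) := Real.rpow_pos_of_pos hnRpos _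
              rw [div_le_iff₀ h5] at h4
              linarith [h4]
            calc x ^ s = x ^ (n:ℕ) * x ^ (s - n) := hsplit
              _ ≤ x ^ (n:ℕ) * (3 * (n:ℝ) ^ (s - n)) :=
                  mul_le_mul_of_nonneg_left hratio (by positivity)
              _ = 3 * (x ^ (n:ℕ) * (n:ℝ) ^ (s - n)) := by ring
          have : x ^ s / Real.Gamma (s+1) ≤ 3 * (x ^ (n:ℕ) / (Nat.factorial n : ℝ)) := by
            rw [div_le_iff₀ hΓpos]
            calc x ^ s ≤ 3 * (x ^ (n:ℕ) * (n:ℝ) ^ (s - n)) := hx1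
              _ = 3 * x ^ (n:ℕ) / (Nat.factorial n : ℝ) *
                  ((Nat.factorial n : ℝ) * (n:ℝ) ^ (s - n)) := by
                  field_simp
              _ ≤ 3 * x ^ (n:ℕ) / (Nat.factorial n : ℝ) * Real.Gamma (s+1) := by
                  apply mul_le_mul_of_nonneg_left hA (by positivity)
              _ = 3 * (x ^ (n:ℕ) / (Nat.factorial n : ℝ)) * Real.Gamma (s+1) := by ring
          linarith

/-- If `α·K ≥ 1` and `k₁ < k₂` have the same residue mod `K`, the floors of `α k₁, α k₂` differ. -/
lemma floor_lt_of_mod_eq (α : ℝ) (hα : 0 < α) (K : ℕ) (hK : (1:ℝ) ≤ α * K)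
    {k₁ k₂ : ℕ} (hlt : k₁ < k₂) (hmod : k₁ % K = k₂ % K) :
    ⌊α * (k₁ : ℝ)⌋₊ < ⌊α * (k₂ : ℝ)⌋₊ := by
  have hKpos : 0 < K := by
    by_contra h
    push_neg at h
    interval_cases K
    simp at hK
    linarith
  have hstep : k₁ + K ≤ k₂ := by
    have h1 := Nat.div_add_mod k₁ K
    have h2 := Nat.div_add_mod k₂ K
    have hdiv : k₁ / K < k₂ / K := by
      by_contra hcon
      push_neg at hcon
      have hle : K * (k₂ / K) ≤ K * (k₁ / K) := Nat.mul_le_mul_left K hcon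
      omega
    have hmul : K * (k₁ / K) + K ≤ K * (k₂ / K) := by
      have h3 : k₁ / K + 1 ≤ k₂ / K := Nat.succ_le_of_lt hdiv
      calc K * (k₁ / K) + K = K * (k₁ / K + 1) := by ring
        _ ≤ K * (k₂ / K) := Nat.mul_le_mul_left K h3
    omega
  have hcast : (k₁ : ℝ) + K ≤ (k₂ : ℝ) := by exact_mod_cast hstep
  have hreal : α * k₁ + 1 ≤ α * k₂ := by
    have := mul_le_mul_of_nonneg_left hcast hα.le
    nlinarith
  have h1 : ⌊α * (k₁ : ℝ)⌋₊ + 1 = ⌊α * (k₁ : ℝ) + 1⌋₊ :=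
    (Nat.floor_add_one (by positivity)).symm
  calc ⌊α * (k₁ : ℝ)⌋₊ < ⌊α * (k₁ : ℝ)⌋₊ + 1 := Nat.lt_succ_self _
    _ = ⌊α * (k₁ : ℝ) + 1⌋₊ := h1
    _ ≤ ⌊α * (k₂ : ℝ)⌋₊ := Nat.floor_le_floor hreal

/-- for `0 < α < 2` there is `C > 0` such that
`E_α(w t^α) ≤ C e^{w^{1/α} t}` for all `w ≥ 0`, `t ≥ 0`. -/
theorem mittagLeffler_exp_bound
    (α : ℝ) (hα : 0 < α) (hα2 : α < 2) :
    ∃ C : ℝ, 0 < C ∧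
      ∀ w t : ℝ, 0 ≤ w → 0 ≤ t →
        mittagLeffler α (w * t ^ α) ≤ C * Real.exp (w ^ (1 / α) * t) := by
  classical
  set K : ℕ := ⌈1 / α⌉₊ with hKdef
  have hKpos : 0 < K := Nat.ceil_pos.mpr (by positivity)
  have hKα : (1:ℝ) ≤ α * K := by
    have h1 : (1 / α : ℝ) ≤ K := Nat.le_ceil _
    have := mul_le_mul_of_nonneg_left h1 hα.le
    rwa [mul_one_div, div_self hα.ne'] at this
  have hKR : (0:ℝ) < K := by exact_mod_cast hKpos
  refine ⟨6 * K, by positivity, ?_⟩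
  intro w t hw ht
  set x : ℝ := w ^ (1 / α) * t with hxdef
  have hx : 0 ≤ x := mul_nonneg (Real.rpow_nonneg hw _) ht
  have hz : w * t ^ α = x ^ α := by
    rw [hxdef, Real.mul_rpow (Real.rpow_nonneg hw _) ht,
      ← Real.rpow_mul hw, one_div_mul_cancel hα.ne', Real.rpow_one]
  have hzk : ∀ k : ℕ, (w * t ^ α) ^ k = x ^ (α * (k : ℝ)) := by
    intro k
    rw [hz, ← Real.rpow_natCast (x ^ α) k, ← Real.rpow_mul hx]
  -- the exponential series
  set F : ℕ → ℝ := fun m => x ^ m / (Nat.factorial m : ℝ) with hFdef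
  have hF : Summable F := Real.summable_pow_div_factorial x
  have hFnn : ∀ m, 0 ≤ F m := fun m => by positivity
  have hFsum : ∑' m, F m = Real.exp x := by
    rw [Real.exp_eq_exp_ℝ, NormedSpace.exp_eq_tsum_div]
  -- the majorant on ℕ × Fin K
  set G : ℕ × Fin K → ℝ := fun p => F p.1 with hGdef
  have hGnn : ∀ p, 0 ≤ G p := fun p => hFnn p.1
  have hG : Summable G := by
    rw [summable_prod_of_nonneg hGnn]
    constructor
    · intro m
      exact Summable.of_finite
    · apply Summable.congr ((hF.mul_left (K : ℝ)))
      intro m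
      rw [tsum_fintype]
      simp [hGdef, Finset.sum_const, nsmul_eq_mul, mul_comm]
  have hGsum : ∑' p, G p = K * Real.exp x := by
    rw [Summable.tsum_prod' hG (fun m => Summable.of_finite)]
    have : ∀ m, ∑' _ : Fin K, F m = (K : ℝ) * F m := by
      intro m
      rw [tsum_fintype]
      simp [Finset.sum_const, nsmul_eq_mul]
    rw [tsum_congr this, tsum_mul_left, hFsum]
  -- the two injections
  have hinj : ∀ c : ℕ, Function.Injective
      (fun k : ℕ => ((⌊α * (k:ℝ)⌋₊ + c, ⟨k % K, Nat.mod_lt k hKpos⟩) : ℕ × Fin K)) := by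
    intro c k₁ k₂ h
    simp only [Prod.mk.injEq, Fin.mk.injEq, Nat.add_right_cancel_iff] at h
    obtain ⟨h1, h2⟩ := h
    rcases lt_trichotomy k₁ k₂ with hlt | heq | hgt
    · exact absurd h1 (Nat.ne_of_lt (floor_lt_of_mod_eq α hα K hKα hlt h2))
    · exact heq
    · exact absurd h1.symm (Nat.ne_of_lt (floor_lt_of_mod_eq α hα K hKα hgt h2.symm))
  set ι : ℕ → ℕ × Fin K :=
    fun k => (⌊α * (k:ℝ)⌋₊, ⟨k % K, Nat.mod_lt k hKpos⟩) with hιdef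
  set ι' : ℕ → ℕ × Fin K :=
    fun k => (⌊α * (k:ℝ)⌋₊ + 1, ⟨k % K, Nat.mod_lt k hKpos⟩) with hι'def
  have hinj0 : Function.Injective ι := by
    have := hinj 0
    simpa using this
  have hinj1 : Function.Injective ι' := hinj 1
  -- pointwise bound
  have hbound : ∀ k : ℕ, x ^ (α * (k:ℝ)) / Real.Gamma (α * k + 1)
      ≤ 3 * (G (ι k) + G (ι' k)) := by
    intro k
    have hs : 0 ≤ α * (k : ℝ) := by positivity
    exact key_bound (α * k) x hs hx
  have hsum1 : Summable (fun k => G (ι k)) := hG.comp_injective hinj0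
  have hsum2 : Summable (fun k => G (ι' k)) := hG.comp_injective hinj1
  have hsumb : Summable (fun k => 3 * (G (ι k) + G (ι' k))) := (hsum1.add hsum2).mul_left 3
  have hfnn : ∀ k : ℕ, 0 ≤ x ^ (α * (k:ℝ)) / Real.Gamma (α * k + 1) := by
    intro k
    have hΓpos : 0 < Real.Gamma (α * k + 1) := Real.Gamma_pos_of_pos (by positivity)
    exact div_nonneg (Real.rpow_nonneg hx _) hΓpos.le
  have hfs : Summable (fun k : ℕ => x ^ (α * (k:ℝ)) / Real.Gamma (α * k + 1)) :=
    Summable.of_nonneg_of_le hfnn hbound hsumb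
  have ht1 : ∑' k, G (ι k) ≤ ∑' p, G p := tsum_comp_le_tsum_of_inj hG hGnn hinj0
  have ht2 : ∑' k, G (ι' k) ≤ ∑' p, G p := tsum_comp_le_tsum_of_inj hG hGnn hinj1
  have hexp_pos : 0 < Real.exp x := Real.exp_pos x
  calc mittagLeffler α (w * t ^ α)
      = ∑' k : ℕ, x ^ (α * (k:ℝ)) / Real.Gamma (α * k + 1) := by
        unfold mittagLeffler
        exact tsum_congr fun k => by rw [hzk k]
    _ ≤ ∑' k : ℕ, 3 * (G (ι k) + G (ι' k)) := Summable.tsum_le_tsum hbound hfs hsumb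
    _ = 3 * ((∑' k, G (ι k)) + ∑' k, G (ι' k)) := by
        rw [tsum_mul_left, Summable.tsum_add hsum1 hsum2]
    _ ≤ 3 * ((K * Real.exp x) + (K * Real.exp x)) := by
        rw [hGsum] at ht1 ht2
        linarith
    _ = 6 * K * Real.exp x := by ring
end
end
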